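/- arXiv:1802.01902 — 5 statements merged into one kernel-verified Lean document; each statement's English description precedes it below -/
import Mathlib

section
/- Let w be a fast-growing weight, 1 ≤ p < ∞, and f ∈ L^p_w(ℝ) supported in (-∞,0] with J^k f = 0 for 1 ≤ k ≤ m. Then for each 1 ≤ k ≤ m, I^k f ∈ L¹(ℝ) and ‖I^k f‖₁ ≤ C ‖f‖_{p,w} for a constant C depending only on k, p, w. -/
/-!
By Cauchy's formula `I^{n+1} f x = (n!)⁻¹ ∫_{y ≤ x} (x - y)^n f y`. For `x ≥ 0` the support
condition lets one integrate over all of `ℝ`, and expanding `(x - y)^n` binomially leaves only the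
vanishing moments, so `I^{n+1} f` lives on `(-∞, 0]`. There Fubini bounds `‖I^{n+1} f‖₁` by the
moment `∫ (1 + |y|)^{n+1} |f y|`, which Hölder's inequality controls by `‖f‖_{p,w}` after splitting
`(1 + |y|)^{n+1} |f| = (|f| w^{1/p}) ((1 + |y|)^{n+1} w^{-1/p})`: the second factor is in every
`L^q` because `w` outgrows every polynomial.
-/

open MeasureTheory Set Real

/-- Iterated antiderivative from `-∞`. -/
noncomputable def iterInt (f : ℝ → ℝ) : ℕ → ℝ → ℝ
  | 0 => f
  | m + 1 => fun x => ∫ y in Iic x, iterInt f m y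

section Holder

variable {α : Type*} [MeasurableSpace α] {μ : Measure α}

theorem memLp_ofReal_of_integrable_rpow {g : α → ℝ} {p : ℝ} (hp : 0 < p) (hg : Measurable g)
    (hg0 : ∀ x, 0 ≤ g x) (hgp : Integrable (fun x => g x ^ p) μ) :
    MemLp g (ENNReal.ofReal p) μ := by
  rw [← integrable_norm_rpow_iff hg.aestronglyMeasurable (by simpa using hp)
    ENNReal.ofReal_ne_top, ENNReal.toReal_ofReal hp.le]
  simpa only [Real.norm_of_nonneg (hg0 _)] using hgp

theorem integrable_mul_abs_and_integral_le_of_holderConjugate {p q : ℝ}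
    (hpq : p.HolderConjugate q) {w v f : α → ℝ} (hw : ∀ x, 0 < w x) (hw_meas : Measurable w)
    (hv : ∀ x, 0 ≤ v x) (hv_meas : Measurable v) (hf : Measurable f)
    (hfw : Integrable (fun x => |f x| ^ p * w x) μ)
    (hvw : Integrable (fun x => (v x * w x ^ (-(1 / p))) ^ q) μ) :
    Integrable (fun x => v x * |f x|) μ ∧ ∫ x, v x * |f x| ∂μ ≤
      (∫ x, |f x| ^ p * w x ∂μ) ^ (1 / p) *
        (∫ x, (v x * w x ^ (-(1 / p))) ^ q ∂μ) ^ (1 / q) := by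
  set a := fun x => |f x| * w x ^ (1 / p)
  set b := fun x => v x * w x ^ (-(1 / p))
  have ha0 : ∀ x, 0 ≤ a x := fun x => mul_nonneg (abs_nonneg _) (rpow_nonneg (hw x).le _)
  have hb0 : ∀ x, 0 ≤ b x := fun x => mul_nonneg (hv x) (rpow_nonneg (hw x).le _)
  have hab : (fun x => v x * |f x|) = fun x => a x * b x := by
    funext x
    simp only [a, b]
    rw [mul_mul_mul_comm, ← rpow_add (hw x), add_neg_cancel, rpow_zero, mul_one, mul_comm]
  have hap : ∀ x, a x ^ p = |f x| ^ p * w x := fun x => by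
    rw [mul_rpow (abs_nonneg _) (rpow_nonneg (hw x).le _), ← rpow_mul (hw x).le, one_div,
      inv_mul_cancel₀ hpq.pos.ne', rpow_one]
  have ha : MemLp a (ENNReal.ofReal p) μ :=
    memLp_ofReal_of_integrable_rpow hpq.pos (hf.abs.mul (hw_meas.pow_const _)) ha0
      (by simpa only [hap] using hfw)
  have hb : MemLp b (ENNReal.ofReal q) μ :=
    memLp_ofReal_of_integrable_rpow hpq.symm.pos (hv_meas.mul (hw_meas.pow_const _)) hb0 hvw
  have := hpq.ennrealOfReal
  rw [hab]
  refine ⟨ha.integrable_mul hb, ?_⟩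
  simpa only [hap] using integral_mul_le_Lp_mul_Lq_of_nonneg hpq (ae_of_all _ ha0)
    (ae_of_all _ hb0) ha hb

theorem integrable_mul_abs_and_integral_le_of_le_mul {w v f : α → ℝ} {C : ℝ}
    (hv_meas : Measurable v) (hv : ∀ x, 0 ≤ v x) (hvw : ∀ x, v x ≤ C * w x) (hf : Measurable f)
    (hfw : Integrable (fun x => |f x| * w x) μ) :
    Integrable (fun x => v x * |f x|) μ ∧ ∫ x, v x * |f x| ∂μ ≤ C * ∫ x, |f x| * w x ∂μ := by
  have hle : ∀ x, v x * |f x| ≤ C * (|f x| * w x) := fun x => by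
    rw [mul_left_comm, mul_comm]
    exact mul_le_mul_of_nonneg_left (hvw x) (abs_nonneg _)
  have hint : Integrable (fun x => v x * |f x|) μ :=
    (hfw.const_mul C).mono' (hv_meas.mul hf.abs).aestronglyMeasurable
      (ae_of_all _ fun x => (norm_of_nonneg (mul_nonneg (hv x) (abs_nonneg _))).trans_le (hle x))
  exact ⟨hint, (integral_mono hint (hfw.const_mul C) hle).trans_eq (integral_const_mul _ _)⟩

end Holder

theorem exists_one_add_abs_pow_mul_rpow_neg_le {w : ℝ → ℝ} (hw_pos : ∀ x, 0 < w x)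
    (hw_fast : ∀ j : ℕ, ∃ C : ℝ, ∀ x : ℝ, (1 + |x|) ^ j ≤ C * w x) {p : ℝ} (hp : 0 < p) (n : ℕ) :
    ∃ C ≥ 0, ∀ x, (1 + |x|) ^ n * w x ^ (-(1 / p)) ≤ C * (1 + |x|) ^ (-2 : ℝ) := by
  obtain ⟨j, hj⟩ := exists_nat_ge (p * (n + 2))
  obtain ⟨C, hC⟩ := hw_fast j
  have hC0 : 0 ≤ C :=
    nonneg_of_mul_nonneg_left ((by positivity : (0 : ℝ) ≤ _).trans (hC 0)) (hw_pos 0)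
  refine ⟨C ^ (1 / p), by positivity, fun x => ?_⟩
  have hu : 1 ≤ 1 + |x| := le_add_of_nonneg_right (abs_nonneg x)
  have hgrowth : (1 + |x|) ^ ((n : ℝ) + 2) ≤ C ^ (1 / p) * w x ^ (1 / p) := calc
    (1 + |x|) ^ ((n : ℝ) + 2) ≤ (1 + |x|) ^ ((j : ℝ) * (1 / p)) := by
      refine rpow_le_rpow_of_exponent_le hu ?_
      rw [mul_one_div, le_div_iff₀ hp]
      linarith
    _ = ((1 + |x|) ^ j) ^ (1 / p) := by rw [rpow_mul (by positivity), rpow_natCast]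
    _ ≤ (C * w x) ^ (1 / p) := rpow_le_rpow (by positivity) (hC x) (by positivity)
    _ = C ^ (1 / p) * w x ^ (1 / p) := mul_rpow hC0 (hw_pos x).le
  have hw_inv : w x ^ (1 / p) * w x ^ (-(1 / p)) = 1 := by
    rw [← rpow_add (hw_pos x), add_neg_cancel, rpow_zero]
  calc (1 + |x|) ^ n * w x ^ (-(1 / p))
      = (1 + |x|) ^ ((n : ℝ) + 2) * w x ^ (-(1 / p)) * (1 + |x|) ^ (-2 : ℝ) := by
        rw [rpow_add (by positivity), rpow_natCast, mul_right_comm,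
          mul_assoc _ _ ((1 + |x|) ^ (-2 : ℝ)), ← rpow_add (by positivity)]
        norm_num
    _ ≤ C ^ (1 / p) * w x ^ (1 / p) * w x ^ (-(1 / p)) * (1 + |x|) ^ (-2 : ℝ) := by
        have := rpow_nonneg (hw_pos x).le (-(1 / p))
        gcongr
    _ = C ^ (1 / p) * (1 + |x|) ^ (-2 : ℝ) := by rw [mul_assoc _ (w x ^ (1 / p)), hw_inv, mul_one]

theorem integrable_one_add_abs_pow_mul_rpow_neg_rpow {w : ℝ → ℝ} (hw_pos : ∀ x, 0 < w x)
    (hw_cont : Continuous w) (hw_fast : ∀ j : ℕ, ∃ C : ℝ, ∀ x : ℝ, (1 + |x|) ^ j ≤ C * w x)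
    {p q : ℝ} (hp : 0 < p) (hq : 1 ≤ q) (n : ℕ) :
    Integrable fun x => ((1 + |x|) ^ n * w x ^ (-(1 / p))) ^ q := by
  obtain ⟨C, hC0, hC⟩ := exists_one_add_abs_pow_mul_rpow_neg_le hw_pos hw_fast hp n
  have hb0 : ∀ x, 0 ≤ (1 + |x|) ^ n * w x ^ (-(1 / p)) := fun x =>
    mul_nonneg (by positivity) (rpow_nonneg (hw_pos x).le _)
  have hdecay : Integrable fun x : ℝ => (1 + ‖x‖) ^ (-(2 * q)) :=
    integrable_one_add_norm (by norm_num; linarith)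
  refine (hdecay.const_mul (C ^ q)).mono' ?_ (ae_of_all _ fun x => ?_)
  · exact (((continuous_const.add continuous_abs).pow n).mul
      (hw_cont.rpow_const fun x => Or.inl (hw_pos x).ne')).rpow_const
      (fun _ => Or.inr (by linarith)) |>.aestronglyMeasurable
  · rw [norm_of_nonneg (rpow_nonneg (hb0 x) _), norm_eq_abs]
    calc ((1 + |x|) ^ n * w x ^ (-(1 / p))) ^ q ≤ (C * (1 + |x|) ^ (-2 : ℝ)) ^ q :=
          rpow_le_rpow (hb0 x) (hC x) (by linarith)
      _ = C ^ q * (1 + |x|) ^ (-(2 * q)) := by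
          rw [mul_rpow hC0 (by positivity), ← rpow_mul (by positivity), neg_mul]

theorem exists_integral_one_add_abs_pow_mul_le {w : ℝ → ℝ} (hw_pos : ∀ x, 0 < w x)
    (hw_cont : Continuous w) (hw_fast : ∀ j : ℕ, ∃ C : ℝ, ∀ x : ℝ, (1 + |x|) ^ j ≤ C * w x)
    {p : ℝ} (hp1 : 1 ≤ p) (n : ℕ) :
    ∃ D > 0, ∀ f : ℝ → ℝ, Measurable f → Integrable (fun x => |f x| ^ p * w x) →
      Integrable (fun y => (1 + |y|) ^ n * |f y|) ∧
        ∫ y, (1 + |y|) ^ n * |f y| ≤ D * (∫ x, |f x| ^ p * w x) ^ (1 / p) := by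
  suffices ∃ D, ∀ f : ℝ → ℝ, Measurable f → Integrable (fun x => |f x| ^ p * w x) →
      Integrable (fun y => (1 + |y|) ^ n * |f y|) ∧
        ∫ y, (1 + |y|) ^ n * |f y| ≤ D * (∫ x, |f x| ^ p * w x) ^ (1 / p) by
    obtain ⟨D, hD⟩ := this
    refine ⟨max D 1, by positivity, fun f hf hfw => ?_⟩
    obtain ⟨hint, hle⟩ := hD f hf hfw
    refine ⟨hint, hle.trans (mul_le_mul_of_nonneg_right (le_max_left _ _) ?_)⟩
    exact rpow_nonneg (integral_nonneg fun x => mul_nonneg (by positivity) (hw_pos x).le) _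
  have hv_meas : Measurable fun y : ℝ => (1 + |y|) ^ n := by fun_prop
  rcases hp1.eq_or_lt with rfl | hp
  · obtain ⟨C, hC⟩ := hw_fast n
    refine ⟨C, fun f hf hfw => ?_⟩
    simp only [rpow_one, div_one] at hfw ⊢
    exact integrable_mul_abs_and_integral_le_of_le_mul hv_meas (fun _ => by positivity) hC hf hfw
  · have hpq := Real.HolderConjugate.conjExponent hp
    refine ⟨(∫ x, ((1 + |x|) ^ n * w x ^ (-(1 / p))) ^ p.conjExponent) ^ (1 / p.conjExponent),
      fun f hf hfw => ?_⟩
    rw [mul_comm]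
    exact integrable_mul_abs_and_integral_le_of_holderConjugate hpq hw_pos hw_cont.measurable
      (fun _ => by positivity) hv_meas hf hfw
      (integrable_one_add_abs_pow_mul_rpow_neg_rpow hw_pos hw_cont hw_fast hpq.pos hpq.symm.lt.le n)

-- Integrating this kernel over the triangle `y ≤ t ≤ x` in either order is the induction step
-- of Cauchy's formula.
noncomputable def cauchyKernel (g : ℝ → ℝ) (n : ℕ) (x : ℝ) (q : ℝ × ℝ) : ℝ :=
  if q.2 ≤ q.1 ∧ q.1 ≤ x then (q.1 - q.2) ^ n * g q.2 else 0

section CauchyKernel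

variable {g : ℝ → ℝ} {n : ℕ} {x : ℝ}

theorem measurable_cauchyKernel (hg : Measurable g) : Measurable (cauchyKernel g n x) :=
  Measurable.ite ((measurableSet_le measurable_snd measurable_fst).inter
      (measurableSet_le measurable_fst measurable_const))
    (((measurable_fst.sub measurable_snd).pow_const n).mul (hg.comp measurable_snd))
    measurable_const

theorem abs_cauchyKernel (q : ℝ × ℝ) :
    |cauchyKernel g n x q| = cauchyKernel (fun y => |g y|) n x q := by
  unfold cauchyKernel
  split_ifs with h
  · rw [abs_mul, abs_pow, abs_of_nonneg (sub_nonneg.2 h.1)]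
  · exact abs_zero

theorem integral_cauchyKernel_dy (t : ℝ) :
    ∫ y, cauchyKernel g n x (t, y) =
      (Iic x).indicator (fun t => ∫ y in Iic t, (t - y) ^ n * g y) t := by
  by_cases ht : t ≤ x
  · rw [indicator_of_mem (mem_Iic.2 ht), ← integral_indicator measurableSet_Iic]
    congr 1 with y
    simp [cauchyKernel, indicator_apply, ht]
  · rw [indicator_of_notMem (notMem_Iic.2 (not_le.1 ht))]
    simp [cauchyKernel, ht]

theorem cauchyKernel_apply_eq_indicator (y : ℝ) :
    (fun t => cauchyKernel g n x (t, y)) =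
      fun t => (Icc y x).indicator (fun t => (t - y) ^ n) t * g y := by
  funext t
  simp [cauchyKernel, indicator_apply]

theorem integral_cauchyKernel_dt (y : ℝ) :
    ∫ t, cauchyKernel g n x (t, y) =
      (Iic x).indicator (fun y => (x - y) ^ (n + 1) / (n + 1) * g y) y := by
  rw [cauchyKernel_apply_eq_indicator, integral_mul_const, integral_indicator measurableSet_Icc]
  by_cases hy : y ≤ x
  · rw [indicator_of_mem (mem_Iic.2 hy), integral_Icc_eq_integral_Ioc,
      ← intervalIntegral.integral_of_le hy, intervalIntegral.integral_comp_sub_right (· ^ n) y,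
      sub_self, integral_pow]
    simp
  · rw [indicator_of_notMem (notMem_Iic.2 (not_le.1 hy)), Icc_eq_empty hy,
      Measure.restrict_empty, integral_zero_measure, zero_mul]

theorem integrable_cauchyKernel (hg : Measurable g)
    (hgi : IntegrableOn (fun y => (x - y) ^ (n + 1) * g y) (Iic x)) :
    Integrable (cauchyKernel g n x) (volume.prod volume) := by
  rw [integrable_prod_iff' (measurable_cauchyKernel hg).aestronglyMeasurable]
  refine ⟨ae_of_all _ fun y => ?_, ?_⟩
  · rw [cauchyKernel_apply_eq_indicator]
    exact (continuous_pow n |>.comp (continuous_sub_right y) |>.integrableOn_Icc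
      |>.integrable_indicator measurableSet_Icc).mul_const _
  · simp only [norm_eq_abs, abs_cauchyKernel, integral_cauchyKernel_dt]
    refine (integrable_indicator_iff measurableSet_Iic).2
      (IntegrableOn.congr_fun (hgi.norm.div_const (n + 1)) (fun y hy => ?_) measurableSet_Iic)
    rw [norm_mul, norm_pow, norm_of_nonneg (sub_nonneg.2 (mem_Iic.1 hy)), norm_eq_abs,
      div_mul_eq_mul_div]

theorem integral_integral_cauchyKernel_swap (hg : Measurable g)
    (hgi : IntegrableOn (fun y => (x - y) ^ (n + 1) * g y) (Iic x)) :
    ∫ t, ∫ y, cauchyKernel g n x (t, y) = ∫ y in Iic x, (x - y) ^ (n + 1) / (n + 1) * g y := by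
  rw [integral_integral_swap (f := fun t y => cauchyKernel g n x (t, y))
    (integrable_cauchyKernel hg hgi)]
  simp only [integral_cauchyKernel_dt]
  exact integral_indicator measurableSet_Iic

end CauchyKernel

theorem abs_sub_le_one_add_abs_mul (t y : ℝ) : |t - y| ≤ (1 + |t|) * (1 + |y|) := by
  nlinarith [abs_sub t y, abs_nonneg t, abs_nonneg y]

section Moments

variable {f : ℝ → ℝ}

theorem integrable_sub_pow_mul (hf : Measurable f)
    (hfi : ∀ j : ℕ, Integrable fun y => (1 + |y|) ^ j * |f y|) (n : ℕ) (t : ℝ) :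
    Integrable fun y => (t - y) ^ n * f y := by
  refine ((hfi n).const_mul ((1 + |t|) ^ n)).mono' (by fun_prop) (ae_of_all _ fun y => ?_)
  rw [norm_mul, norm_pow, norm_eq_abs, norm_eq_abs, ← mul_assoc, ← mul_pow]
  gcongr
  exact abs_sub_le_one_add_abs_mul t y

theorem iterInt_succ_eq (hf : Measurable f)
    (hfi : ∀ j : ℕ, Integrable fun y => (1 + |y|) ^ j * |f y|) (n : ℕ) (x : ℝ) :
    iterInt f (n + 1) x = (n.factorial : ℝ)⁻¹ * ∫ y in Iic x, (x - y) ^ n * f y := by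
  induction n generalizing x with
  | zero => simp [iterInt]
  | succ n ih =>
    have hswap := integral_integral_cauchyKernel_swap hf
      (integrable_sub_pow_mul hf hfi (n + 1) x).integrableOn
    calc iterInt f (n + 2) x
        = ∫ t in Iic x, (n.factorial : ℝ)⁻¹ * ∫ y in Iic t, (t - y) ^ n * f y :=
          setIntegral_congr_fun measurableSet_Iic fun t _ => ih t
      _ = (n.factorial : ℝ)⁻¹ * ∫ t, ∫ y, cauchyKernel f n x (t, y) := by
          simp only [integral_cauchyKernel_dy, integral_indicator measurableSet_Iic,
            integral_const_mul]
      _ = _ := by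
          rw [hswap, ← integral_const_mul, ← integral_const_mul]
          congr 1 with y
          push_cast [Nat.factorial_succ]
          field_simp

theorem setIntegral_Iic_sub_pow_mul_eq_zero (hf : Measurable f)
    (hfi : ∀ j : ℕ, Integrable fun y => (1 + |y|) ^ j * |f y|)
    (hsupp : Function.support f ⊆ Iic 0) {n : ℕ}
    (hmom : ∀ i ≤ n, ∫ y in Iic (0 : ℝ), (-y) ^ i * f y = 0) {t : ℝ} (ht : 0 ≤ t) :
    ∫ y in Iic t, (t - y) ^ n * f y = 0 := by
  have hsupp_int :
      ∀ {s : Set ℝ}, Iic 0 ⊆ s → ∀ g : ℝ → ℝ, ∫ y in s, g y * f y = ∫ y, g y * f y :=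
    fun hs g => setIntegral_eq_integral_of_forall_compl_eq_zero fun y hy => by
      rw [Function.notMem_support.1 fun h => hy (hs (hsupp h)), mul_zero]
  have hint : ∀ k, Integrable fun y => (-y) ^ k * f y := fun k => by
    simpa using integrable_sub_pow_mul hf hfi k 0
  calc ∫ y in Iic t, (t - y) ^ n * f y
      = ∫ y, ∑ k ∈ Finset.range (n + 1), (t ^ (n - k) * n.choose k) * ((-y) ^ k * f y) := by
        rw [hsupp_int (Iic_subset_Iic.2 ht)]
        congr 1 with y
        rw [sub_eq_neg_add, add_pow, Finset.sum_mul]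
        congr 1 with k
        ring
    _ = ∑ k ∈ Finset.range (n + 1), (t ^ (n - k) * n.choose k) * ∫ y, (-y) ^ k * f y := by
        rw [integral_finsetSum _ fun k _ => (hint k).const_mul _]
        simp only [integral_const_mul]
    _ = 0 := Finset.sum_eq_zero fun k hk => by
        rw [← hsupp_int subset_rfl, hmom k (Finset.mem_range_succ_iff.1 hk), mul_zero]

theorem integrable_iterInt_succ_and_integral_abs_le (hf : Measurable f)
    (hfi : ∀ j : ℕ, Integrable fun y => (1 + |y|) ^ j * |f y|)
    (hsupp : Function.support f ⊆ Iic 0) {n : ℕ}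
    (hmom : ∀ i ≤ n, ∫ y in Iic (0 : ℝ), (-y) ^ i * f y = 0) :
    Integrable (iterInt f (n + 1)) ∧
      ∫ x, |iterInt f (n + 1) x| ≤ ∫ y, (1 + |y|) ^ (n + 1) * |f y| := by
  have hfi_abs : ∀ j : ℕ, Integrable fun y => (1 + |y|) ^ j * |(|f y|)| := by
    simpa only [abs_abs] using hfi
  have heq :
      iterInt f (n + 1) = fun t => (n.factorial : ℝ)⁻¹ * ∫ y, cauchyKernel f n 0 (t, y) := by
    funext t
    rw [iterInt_succ_eq hf hfi, integral_cauchyKernel_dy]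
    by_cases ht : t ≤ 0
    · rw [indicator_of_mem (mem_Iic.2 ht)]
    · rw [indicator_of_notMem (notMem_Iic.2 (not_le.1 ht)),
        setIntegral_Iic_sub_pow_mul_eq_zero hf hfi hsupp hmom (le_of_not_ge ht), mul_zero]
  have hK := integrable_cauchyKernel hf (integrable_sub_pow_mul hf hfi (n + 1) 0).integrableOn
  have hK_abs := integrable_cauchyKernel hf.abs
    (integrable_sub_pow_mul hf.abs hfi_abs (n + 1) 0).integrableOn
  have hint : Integrable (iterInt f (n + 1)) := heq ▸ hK.integral_prod_left.const_mul _
  have hbound : ∀ t, |iterInt f (n + 1) t| ≤ ∫ y, cauchyKernel (fun y => |f y|) n 0 (t, y) := by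
    intro t
    have hfact : (n.factorial : ℝ)⁻¹ ≤ 1 :=
      inv_le_one_of_one_le₀ (Nat.one_le_cast.2 n.factorial_pos)
    rw [heq, abs_mul, abs_of_nonneg (by positivity)]
    calc _ ≤ |∫ y, cauchyKernel f n 0 (t, y)| := mul_le_of_le_one_left (abs_nonneg _) hfact
      _ ≤ ∫ y, |cauchyKernel f n 0 (t, y)| := abs_integral_le_integral_abs
      _ = _ := by simp only [abs_cauchyKernel]
  refine ⟨hint, ?_⟩
  calc ∫ x, |iterInt f (n + 1) x| ≤ ∫ t, ∫ y, cauchyKernel (fun y => |f y|) n 0 (t, y) :=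
        integral_mono hint.abs hK_abs.integral_prod_left hbound
    _ = ∫ y in Iic 0, (0 - y) ^ (n + 1) / (n + 1) * |f y| :=
        integral_integral_cauchyKernel_swap hf.abs
          (integrable_sub_pow_mul hf.abs hfi_abs (n + 1) 0).integrableOn
    _ ≤ ∫ y in Iic 0, (1 + |y|) ^ (n + 1) * |f y| := by
        refine integral_mono_of_nonneg ?_ (hfi (n + 1)).integrableOn ?_ <;>
          refine ae_restrict_of_forall_mem measurableSet_Iic fun y hy => ?_
        · have : 0 ≤ 0 - y := by linarith [mem_Iic.1 hy]
          positivity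
        · dsimp only
          rw [zero_sub, ← abs_of_nonpos (mem_Iic.1 hy)]
          gcongr ?_ * _
          calc |y| ^ (n + 1) / (n + 1) ≤ |y| ^ (n + 1) := div_le_self (by positivity) (by simp)
            _ ≤ (1 + |y|) ^ (n + 1) := by gcongr; linarith
    _ ≤ ∫ y, (1 + |y|) ^ (n + 1) * |f y| :=
        setIntegral_le_integral (hfi (n + 1)) (ae_of_all _ fun y => by positivity)

end Moments

/-- Lemma 2.1(ii), second part: under the same hypotheses, for each `1 ≤ k ≤ m`,
`I^k f ∈ L¹(ℝ)` and `‖I^k f‖₁ ≤ C ‖f‖_{p,w}` with `C = C(k,p,w)` independent of `f`. -/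
theorem iterInt_L1_bound (w : ℝ → ℝ) (hw_pos : ∀ x, 0 < w x)
    (hw_cont : Continuous w)
    (hw_fast : ∀ j : ℕ, ∃ C : ℝ, ∀ x : ℝ, (1 + |x|) ^ j ≤ C * w x)
    (p : ℝ) (hp1 : 1 ≤ p) (m k : ℕ) (hk1 : 1 ≤ k) (hkm : k ≤ m) :
    ∃ C > 0, ∀ f : ℝ → ℝ, Measurable f →
      Integrable (fun x => |f x| ^ p * w x) →
      Function.support f ⊆ Iic (0 : ℝ) →
      (∀ j : ℕ, 1 ≤ j → j ≤ m →
        (1 / (Nat.factorial (j - 1) : ℝ)) * ∫ y in Iic (0 : ℝ), (-y) ^ (j - 1) * f y = 0) →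
      Integrable (iterInt f k) ∧
        ∫ x : ℝ, |iterInt f k x| ≤ C * (∫ x : ℝ, |f x| ^ p * w x) ^ (1 / p) := by
  obtain ⟨n, rfl⟩ : ∃ n, k = n + 1 := ⟨k - 1, by omega⟩
  choose D hD_pos hD using fun j =>
    exists_integral_one_add_abs_pow_mul_le hw_pos hw_cont hw_fast hp1 j
  refine ⟨D (n + 1), hD_pos _, fun f hf hfw hsupp hmom => ?_⟩
  have hfi : ∀ j, Integrable fun y => (1 + |y|) ^ j * |f y| := fun j => (hD j f hf hfw).1
  have hmom' : ∀ i ≤ n, ∫ y in Iic (0 : ℝ), (-y) ^ i * f y = 0 := fun i hi => by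
    simpa [Nat.factorial_ne_zero] using hmom (i + 1) (by omega) (by omega)
  obtain ⟨hint, hle⟩ := integrable_iterInt_succ_and_integral_abs_le hf hfi hsupp hmom'
  exact ⟨hint, hle.trans (hD (n + 1) f hf hfw).2⟩
end

section
/- Let w be a fast-growing weight on ℝ, 1 ≤ p < ∞, m ∈ ℕ, and let f ∈ L^p_w(ℝ) have support in (-∞,0] and satisfy J^k f = 0 for all 1 ≤ k ≤ m. Then the heat semigroup solution satisfies ‖e^{t∂ₓ²} f‖_∞ ≤ C t^{-(1+m)/2} ‖f‖_{p,w} for all t ≥ 1, where C depends only on p, w, m. -/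
open MeasureTheory Set Real
open scoped Nat

/-!
The `m`-th derivative of the heat kernel `y ↦ exp (-(x - y) ^ 2 / (4 t))` is a rescaled Hermite
function, hence bounded by `B t^{-m/2}`. Since `J^k f = 0` for `k ≤ m` means that the moments
`∫ y^k f` vanish for `k < m`, the kernel may be replaced by its Taylor remainder of order `m`
at `0`, which is at most `B t^{-m/2} |y|^m / m!`. The fast growth of `w` then controls
`∫ |y|^m |f|` by `‖f‖_{p,w}`: pointwise `|y|^m |f| ≤ C |f|^p w + (1 + y^2)⁻¹`, so
`∫ |y|^m |f| ≤ C ‖f‖_{p,w}^p + π`, and applying this to `r f` for the right `r > 0` makes the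
bound homogeneous.
-/

theorem pow_abs_mul_exp_neg_sq_div_two_le (n : ℕ) (u : ℝ) :
    |u| ^ n * exp (-(u ^ 2 / 2)) ≤ n ! * exp (1 / 2) := by
  have hpow : |u| ^ n ≤ n ! * exp |u| := by
    have := pow_div_factorial_le_exp |u| (abs_nonneg u) n
    rwa [div_le_iff₀' (by positivity)] at this
  have hexp : |u| + -(u ^ 2 / 2) ≤ 1 / 2 := by nlinarith [sq_abs u, sq_nonneg (|u| - 1)]
  calc |u| ^ n * exp (-(u ^ 2 / 2)) ≤ n ! * exp |u| * exp (-(u ^ 2 / 2)) := by gcongr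
    _ = n ! * exp (|u| + -(u ^ 2 / 2)) := by rw [mul_assoc, ← exp_add]
    _ ≤ n ! * exp (1 / 2) := by gcongr

theorem Polynomial.exists_abs_eval_mul_exp_neg_sq_div_two_le (P : Polynomial ℝ) :
    ∃ B, ∀ u, |P.eval u * exp (-(u ^ 2 / 2))| ≤ B := by
  induction P using Polynomial.induction_on' with
  | add P Q hP hQ =>
    obtain ⟨B, hB⟩ := hP
    obtain ⟨B', hB'⟩ := hQ
    refine ⟨B + B', fun u => ?_⟩
    rw [eval_add, add_mul]
    exact (abs_add_le _ _).trans (add_le_add (hB u) (hB' u))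
  | monomial n a =>
    refine ⟨|a| * (n ! * exp (1 / 2)), fun u => ?_⟩
    rw [eval_monomial, mul_assoc, abs_mul, abs_mul, abs_pow, abs_exp]
    exact mul_le_mul_of_nonneg_left (pow_abs_mul_exp_neg_sq_div_two_le n u) (abs_nonneg a)

theorem exists_abs_iteratedDeriv_gaussian_le (n : ℕ) :
    ∃ B > 0, ∀ u, |iteratedDeriv n (fun u => exp (-(u ^ 2 / 2))) u| ≤ B := by
  obtain ⟨B, hB⟩ :=
    ((Polynomial.hermite n).map (algebraMap ℤ ℝ)).exists_abs_eval_mul_exp_neg_sq_div_two_le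
  have hB0 : 0 ≤ B := (abs_nonneg _).trans (hB 0)
  refine ⟨B + 1, by linarith, fun u => ?_⟩
  rw [iteratedDeriv_eq_iterate, Polynomial.deriv_gaussian_eq_hermite_mul_gaussian, mul_assoc,
    abs_mul, abs_pow, abs_neg, abs_one, one_pow, one_mul, Polynomial.aeval_def,
    Polynomial.eval₂_eq_eval_map]
  linarith [hB u]

theorem abs_iteratedDeriv_comp_mul_sub_le {g : ℝ → ℝ} {n : ℕ} (hg : ContDiff ℝ n g) {B : ℝ}
    (hB : ∀ u, |iteratedDeriv n g u| ≤ B) (c x y : ℝ) :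
    |iteratedDeriv n (fun z => g (c * (z - x))) y| ≤ |c| ^ n * B := by
  rw [iteratedDeriv_comp_sub_const n (fun v => g (c * v)), iteratedDeriv_comp_const_mul hg,
    abs_mul, abs_pow]
  gcongr
  exact hB _

theorem exists_abs_iteratedDeriv_heatKernel_le (n : ℕ) :
    ∃ B > 0, ∀ t > 0, ∀ x y : ℝ,
      |iteratedDeriv n (fun y => exp (-(x - y) ^ 2 / (4 * t))) y| ≤ B * t ^ (-(n : ℝ) / 2) := by
  obtain ⟨B, hB0, hB⟩ := exists_abs_iteratedDeriv_gaussian_le n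
  refine ⟨B, hB0, fun t ht x y => ?_⟩
  set c := (√(2 * t))⁻¹
  have hkernel : (fun y => exp (-(x - y) ^ 2 / (4 * t))) =
      fun y => (fun u => exp (-(u ^ 2 / 2))) (c * (y - x)) := by
    ext y
    have hc2 : c ^ 2 = (2 * t)⁻¹ := by rw [inv_pow, sq_sqrt (by positivity)]
    congr 1
    rw [mul_pow, hc2]
    field_simp
    ring
  have hc : |c| ^ n ≤ t ^ (-(n : ℝ) / 2) := by
    calc |c| ^ n ≤ (√t)⁻¹ ^ n := by
          rw [abs_of_pos (by positivity)]
          gcongr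
          exact inv_anti₀ (sqrt_pos.2 ht) (sqrt_le_sqrt (by linarith))
      _ = t ^ (-(n : ℝ) / 2) := by
          rw [sqrt_eq_rpow, ← rpow_neg ht.le, ← rpow_natCast, ← rpow_mul ht.le]
          ring_nf
  rw [hkernel]
  calc _ ≤ |c| ^ n * B := abs_iteratedDeriv_comp_mul_sub_le (by fun_prop) hB c x y
    _ ≤ B * t ^ (-(n : ℝ) / 2) := by rw [mul_comm]; gcongr

theorem taylorWithinEval_uIcc_eq_sum {g : ℝ → ℝ} {n : ℕ} (hg : ContDiff ℝ n g) {x₀ x : ℝ}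
    (hx : x₀ ≠ x) :
    taylorWithinEval g n (uIcc x₀ x) x₀ x =
      ∑ k ∈ Finset.range (n + 1), iteratedDeriv k g x₀ * (x - x₀) ^ k / k ! := by
  rw [taylor_within_apply]
  refine Finset.sum_congr rfl fun k hk => ?_
  rw [iteratedDerivWithin_eq_iteratedDeriv (uniqueDiffOn_uIcc hx) _ left_mem_uIcc, smul_eq_mul]
  · ring
  · exact (hg.of_le (by exact_mod_cast Finset.mem_range_succ_iff.mp hk)).contDiffAt

theorem abs_sub_sum_iteratedDeriv_le {g : ℝ → ℝ} {n : ℕ} (hg : ContDiff ℝ n g) {M : ℝ}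
    (hM : ∀ u, |iteratedDeriv n g u| ≤ M) (x₀ x : ℝ) :
    |g x - ∑ k ∈ Finset.range n, iteratedDeriv k g x₀ * (x - x₀) ^ k / k !| ≤
      M * |x - x₀| ^ n / n ! := by
  cases n with
  | zero => simpa using hM x
  | succ n =>
    rcases eq_or_ne x₀ x with rfl | hx
    · simp [Finset.sum_range_succ']
    obtain ⟨x', -, hrem⟩ := taylor_mean_remainder_lagrange_iteratedDeriv hx hg.contDiffOn
    rw [← taylorWithinEval_uIcc_eq_sum (hg.of_le (by norm_cast; omega)) hx, hrem, abs_div,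
      abs_mul, abs_pow, Nat.abs_cast]
    gcongr
    exact hM x'

theorem abs_integral_mul_le_of_integral_pow_mul_eq_zero {g f : ℝ → ℝ} {n : ℕ}
    (hg : ContDiff ℝ n g) {M : ℝ} (hM : ∀ u, |iteratedDeriv n g u| ≤ M)
    (hf : ∀ k ≤ n, Integrable (fun y => y ^ k * f y)) (hmom : ∀ k < n, ∫ y, y ^ k * f y = 0)
    (hgf : Integrable (fun y => g y * f y)) :
    |∫ y, g y * f y| ≤ M / n ! * ∫ y, |y| ^ n * |f y| := by
  set T : ℝ → ℝ := fun y => ∑ k ∈ Finset.range n, iteratedDeriv k g 0 * y ^ k / (k ! : ℝ)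
  have hTf : (fun y => T y * f y) =
      fun y => ∑ k ∈ Finset.range n, iteratedDeriv k g 0 / k ! * (y ^ k * f y) := by
    ext y
    rw [Finset.sum_mul]
    exact Finset.sum_congr rfl fun k _ => by ring
  have hTf_int : Integrable (fun y => T y * f y) := by
    rw [hTf]
    exact integrable_finsetSum _ fun k hk => (hf k (Finset.mem_range.mp hk).le).const_mul _
  have hTf_zero : ∫ y, T y * f y = 0 := by
    rw [hTf, integral_finsetSum _ fun k hk => (hf k (Finset.mem_range.mp hk).le).const_mul _]
    exact Finset.sum_eq_zero fun k hk => by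
      rw [integral_const_mul, hmom k (Finset.mem_range.mp hk), mul_zero]
  have hremainder : ∀ y, ‖(g y - T y) * f y‖ ≤ M / n ! * (|y| ^ n * |f y|) := fun y => by
    have := abs_sub_sum_iteratedDeriv_le hg hM 0 y
    simp only [sub_zero] at this
    rw [norm_mul, norm_eq_abs, norm_eq_abs]
    calc |g y - T y| * |f y| ≤ M * |y| ^ n / n ! * |f y| := by gcongr
      _ = M / n ! * (|y| ^ n * |f y|) := by ring
  have hbound_int : Integrable (fun y => |y| ^ n * |f y|) := by
    simpa [abs_mul, abs_pow] using (hf n le_rfl).abs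
  calc |∫ y, g y * f y| = ‖∫ y, (g y - T y) * f y‖ := by
        simp_rw [sub_mul]
        rw [integral_sub hgf hTf_int, hTf_zero, sub_zero, norm_eq_abs]
    _ ≤ ∫ y, M / n ! * (|y| ^ n * |f y|) :=
        norm_integral_le_of_norm_le (hbound_int.const_mul _) (ae_of_all _ hremainder)
    _ = M / n ! * ∫ y, |y| ^ n * |f y| := integral_const_mul _ _

theorem exists_one_add_abs_rpow_le_mul {w : ℝ → ℝ}
    (hw_fast : ∀ j : ℕ, ∃ C : ℝ, ∀ x : ℝ, (1 + |x|) ^ j ≤ C * w x) (s : ℝ) :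
    ∃ C : ℝ, ∀ x : ℝ, (1 + |x|) ^ s ≤ C * w x := by
  obtain ⟨C, hC⟩ := hw_fast ⌈s⌉₊
  refine ⟨C, fun x => le_trans ?_ (hC x)⟩
  rw [← rpow_natCast]
  exact rpow_le_rpow_of_exponent_le (by simp) (Nat.le_ceil s)

theorem self_le_rpow_add_one {a p : ℝ} (ha : 0 ≤ a) (hp : 1 ≤ p) : a ≤ a ^ p + 1 := by
  rcases le_total a 1 with h | h
  · linarith [rpow_nonneg ha p]
  · linarith [self_le_rpow_of_one_le h hp]

theorem pow_abs_mul_le_rpow_mul_add_inv_one_add_sq {p a W y : ℝ} (j : ℕ) (hp : 1 ≤ p)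
    (ha : 0 ≤ a) (hW : (1 + |y|) ^ ((j + 2) * p) ≤ W) :
    |y| ^ j * a ≤ a ^ p * W + (1 + y ^ 2)⁻¹ := by
  set b := (1 + |y|) ^ (j + 2) * a
  have hb : 0 ≤ b := by positivity
  have hbp : b ^ p ≤ a ^ p * W := by
    rw [mul_rpow (by positivity) ha, ← rpow_natCast, ← rpow_mul (by positivity), mul_comm]
    push_cast
    gcongr
  have hdecay : |y| ^ j * (1 + y ^ 2) ≤ (1 + |y|) ^ (j + 2) := by
    rw [pow_add]
    gcongr
    · linarith
    · nlinarith [abs_nonneg y, sq_abs y]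
  have hinv : (1 + y ^ 2)⁻¹ ≤ 1 := inv_le_one_of_one_le₀ (by nlinarith)
  calc |y| ^ j * a ≤ (1 + y ^ 2)⁻¹ * b := by
        rw [← div_eq_inv_mul, le_div_iff₀ (by positivity)]
        calc |y| ^ j * a * (1 + y ^ 2) = |y| ^ j * (1 + y ^ 2) * a := by ring
          _ ≤ b := mul_le_mul_of_nonneg_right hdecay ha
    _ ≤ (1 + y ^ 2)⁻¹ * (b ^ p + 1) :=
        mul_le_mul_of_nonneg_left (self_le_rpow_add_one hb hp) (by positivity)
    _ ≤ b ^ p + (1 + y ^ 2)⁻¹ := by nlinarith [rpow_nonneg hb p]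
    _ ≤ a ^ p * W + (1 + y ^ 2)⁻¹ := by gcongr

theorem integral_pow_abs_mul_abs_le {w f : ℝ → ℝ} {p C : ℝ} (j : ℕ) (hp : 1 ≤ p)
    (hC : ∀ y, (1 + |y|) ^ ((j + 2) * p) ≤ C * w y) (hf : AEStronglyMeasurable f)
    (hint : Integrable (fun y => |f y| ^ p * w y)) :
    Integrable (fun y => |y| ^ j * |f y|) ∧
      ∫ y, |y| ^ j * |f y| ≤ C * (∫ y, |f y| ^ p * w y) + π := by
  have hpoint : ∀ y, |y| ^ j * |f y| ≤ C * (|f y| ^ p * w y) + (1 + y ^ 2)⁻¹ := fun y => by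
    have := pow_abs_mul_le_rpow_mul_add_inv_one_add_sq j hp (abs_nonneg (f y)) (hC y)
    linarith
  have hdom : Integrable (fun y => C * (|f y| ^ p * w y) + (1 + y ^ 2)⁻¹) :=
    (hint.const_mul C).add integrable_inv_one_add_sq
  have hmeas : AEStronglyMeasurable (fun y => |y| ^ j * |f y|) :=
    (continuous_abs.pow j).aestronglyMeasurable.mul hf.norm
  have hint_j : Integrable (fun y => |y| ^ j * |f y|) :=
    hdom.mono' hmeas (ae_of_all _ fun y => by rw [norm_of_nonneg (by positivity)]; exact hpoint y)
  refine ⟨hint_j, ?_⟩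
  calc ∫ y, |y| ^ j * |f y| ≤ ∫ y, (C * (|f y| ^ p * w y) + (1 + y ^ 2)⁻¹) :=
        integral_mono hint_j hdom hpoint
    _ = C * (∫ y, |f y| ^ p * w y) + π := by
        rw [integral_add (hint.const_mul C) integrable_inv_one_add_sq, integral_const_mul,
          integral_univ_inv_one_add_sq]

theorem le_mul_rpow_of_forall_mul_le {A I K c p : ℝ} (hp : 0 < p) (hI : 0 ≤ I)
    (h : ∀ r > 0, r * A ≤ K * (r ^ p * I) + c) : A ≤ (K + c) * I ^ (1 / p) := by
  rcases hI.eq_or_lt with rfl | hI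
  · rw [zero_rpow (by positivity), mul_zero]
    by_contra! hA
    have := h ((|c| + 1) / A) (by positivity)
    rw [div_mul_cancel₀ _ hA.ne', mul_zero, mul_zero, zero_add] at this
    linarith [le_abs_self c]
  · have hr : 0 < I ^ (-(1 / p)) := rpow_pos_of_pos hI _
    have hnorm : (I ^ (-(1 / p))) ^ p * I = 1 := by
      rw [← rpow_mul hI.le, neg_mul, one_div, inv_mul_cancel₀ hp.ne', rpow_neg_one,
        inv_mul_cancel₀ hI.ne']
    have := h _ hr
    rw [hnorm, mul_one, rpow_neg hI.le, inv_mul_eq_div, div_le_iff₀ (by positivity)] at this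
    exact this

theorem exists_integral_pow_abs_mul_abs_le_rpow {w : ℝ → ℝ} (hw : ∀ x, 0 ≤ w x)
    (hw_fast : ∀ j : ℕ, ∃ C : ℝ, ∀ x : ℝ, (1 + |x|) ^ j ≤ C * w x) {p : ℝ} (hp : 1 ≤ p)
    (j : ℕ) :
    ∃ D > 0, ∀ f : ℝ → ℝ, AEStronglyMeasurable f → Integrable (fun y => |f y| ^ p * w y) →
      ∫ y, |y| ^ j * |f y| ≤ D * (∫ y, |f y| ^ p * w y) ^ (1 / p) := by
  obtain ⟨C, hC⟩ := exists_one_add_abs_rpow_le_mul hw_fast ((j + 2) * p)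
  have hC0 : 0 < C := by
    have := hC 0
    simp only [abs_zero, add_zero, one_rpow] at this
    nlinarith [hw 0]
  refine ⟨C + π, by positivity, fun f hf hint => ?_⟩
  refine le_mul_rpow_of_forall_mul_le (by linarith)
    (integral_nonneg fun y => mul_nonneg (by positivity) (hw y)) fun r hr => ?_
  have hscale : ∀ y, |r * f y| ^ p * w y = r ^ p * (|f y| ^ p * w y) := fun y => by
    rw [abs_mul, abs_of_pos hr, mul_rpow hr.le (abs_nonneg _), mul_assoc]
  have hscaled := (integral_pow_abs_mul_abs_le j hp hC (hf.const_mul r)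
    (by simp_rw [hscale]; exact hint.const_mul _)).2
  simp_rw [hscale, integral_const_mul, abs_mul, abs_of_pos hr] at hscaled
  calc r * ∫ y, |y| ^ j * |f y| = ∫ y, |y| ^ j * (r * |f y|) := by
        rw [← integral_const_mul]
        congr 1 with y
        ring
    _ ≤ C * (r ^ p * ∫ y, |f y| ^ p * w y) + π := hscaled

theorem integrable_pow_mul {w f : ℝ → ℝ}
    (hw_fast : ∀ j : ℕ, ∃ C : ℝ, ∀ x : ℝ, (1 + |x|) ^ j ≤ C * w x) {p : ℝ} (hp : 1 ≤ p)
    (hf : AEStronglyMeasurable f) (hint : Integrable (fun y => |f y| ^ p * w y)) (j : ℕ) :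
    Integrable (fun y => y ^ j * f y) := by
  refine (integrable_norm_iff (by fun_prop)).mp ?_
  simpa only [norm_mul, norm_pow, norm_eq_abs] using (integral_pow_abs_mul_abs_le j hp
    (exists_one_add_abs_rpow_le_mul hw_fast _).choose_spec hf hint).1

theorem integrable_exp_neg_sq_div_mul {f : ℝ → ℝ} (hf : Integrable f) {t : ℝ} (ht : 0 ≤ t)
    (x : ℝ) : Integrable (fun y => exp (-(x - y) ^ 2 / (4 * t)) * f y) := by
  refine hf.bdd_mul (c := 1) (by fun_prop) (ae_of_all _ fun y => ?_)
  rw [norm_of_nonneg (exp_pos _).le, exp_le_one_iff]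
  exact div_nonpos_of_nonpos_of_nonneg (by nlinarith) (by positivity)

theorem integral_pow_mul_eq_zero_of_setIntegral_Iic {f : ℝ → ℝ}
    (hsupp : Function.support f ⊆ Iic 0) {m : ℕ}
    (hmom : ∀ k : ℕ, 1 ≤ k → k ≤ m →
      (1 / ((k - 1) ! : ℝ)) * ∫ y in Iic (0 : ℝ), (-y) ^ (k - 1) * f y = 0)
    {k : ℕ} (hk : k < m) : ∫ y, y ^ k * f y = 0 := by
  have h := hmom (k + 1) (by omega) (by omega)
  have hvanish : ∀ y ∉ Iic (0 : ℝ), y ^ k * f y = 0 := fun y hy => by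
    rw [Function.notMem_support.mp (fun h => hy (hsupp h)), mul_zero]
  have hsign : (fun y : ℝ => (-y) ^ k * f y) = fun y => (-1) ^ k * (y ^ k * f y) := by
    ext y
    rw [neg_pow, mul_assoc]
  rw [Nat.add_sub_cancel, hsign, integral_const_mul, mul_eq_zero, mul_eq_zero] at h
  rw [← setIntegral_eq_integral_of_forall_compl_eq_zero hvanish]
  exact (h.resolve_left (by positivity)).resolve_left (pow_ne_zero _ (by norm_num))

theorem heat_decay_of_vanishing_moments_general (w : ℝ → ℝ) (hw_pos : ∀ x, 0 < w x)
    (hw_fast : ∀ j : ℕ, ∃ C : ℝ, ∀ x : ℝ, (1 + |x|) ^ j ≤ C * w x)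
    (p : ℝ) (hp1 : 1 ≤ p) (m : ℕ) :
    ∃ C > 0, ∀ f : ℝ → ℝ, Measurable f →
      Integrable (fun x => |f x| ^ p * w x) →
      Function.support f ⊆ Iic (0 : ℝ) →
      (∀ k : ℕ, 1 ≤ k → k ≤ m →
        (1 / (Nat.factorial (k - 1) : ℝ)) * ∫ y in Iic (0 : ℝ), (-y) ^ (k - 1) * f y = 0) →
      ∀ t : ℝ, 1 ≤ t → ∀ x : ℝ,
        |(2 * π * t) ^ (-(1 : ℝ) / 2) * ∫ y : ℝ, Real.exp (-(x - y) ^ 2 / (4 * t)) * f y| ≤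
          C * t ^ (-(1 + (m : ℝ)) / 2) * (∫ x : ℝ, |f x| ^ p * w x) ^ (1 / p) := by
  obtain ⟨B, hB0, hB⟩ := exists_abs_iteratedDeriv_heatKernel_le m
  obtain ⟨D, hD0, hD⟩ := exists_integral_pow_abs_mul_abs_le_rpow (fun x => (hw_pos x).le)
    hw_fast hp1 m
  refine ⟨B * D / m !, by positivity, fun f hf hint hsupp hmom t ht x => ?_⟩
  have ht0 : 0 < t := by linarith
  have hmoment_int := integrable_pow_mul hw_fast hp1 hf.aestronglyMeasurable hint
  have hcancel := abs_integral_mul_le_of_integral_pow_mul_eq_zero (by fun_prop) (hB t ht0 x)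
    (fun k _ => hmoment_int k) (fun k => integral_pow_mul_eq_zero_of_setIntegral_Iic hsupp hmom)
    (integrable_exp_neg_sq_div_mul (by simpa using hmoment_int 0) ht0.le x)
  have hprefactor : (2 * π * t) ^ (-(1 : ℝ) / 2) ≤ t ^ (-(1 : ℝ) / 2) :=
    rpow_le_rpow_of_nonpos ht0 (by nlinarith [pi_gt_three]) (by norm_num)
  calc |(2 * π * t) ^ (-(1 : ℝ) / 2) * ∫ y, exp (-(x - y) ^ 2 / (4 * t)) * f y|
      = (2 * π * t) ^ (-(1 : ℝ) / 2) * |∫ y, exp (-(x - y) ^ 2 / (4 * t)) * f y| := by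
        rw [abs_mul, abs_of_pos (by positivity)]
    _ ≤ t ^ (-(1 : ℝ) / 2) * (B * t ^ (-(m : ℝ) / 2) / m ! *
          (D * (∫ y, |f y| ^ p * w y) ^ (1 / p))) := by
        gcongr
        exact hcancel.trans (by gcongr; exact hD f hf.aestronglyMeasurable hint)
    _ = B * D / m ! * t ^ (-(1 + (m : ℝ)) / 2) * (∫ y, |f y| ^ p * w y) ^ (1 / p) := by
        rw [show -(1 + (m : ℝ)) / 2 = -1 / 2 + -(m : ℝ) / 2 by ring, rpow_add ht0]
        ring

/-- Proposition 2.2: if `f ∈ L^p_w(ℝ)` (fast-growing weight `w`, `1 ≤ p < ∞`) is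
supported in `(-∞,0]` and `J^k f = 0` for all `1 ≤ k ≤ m`, then
`‖e^{t∂ₓ²} f‖_∞ ≤ C t^{-(1+m)/2} ‖f‖_{p,w}` for all `t ≥ 1`, with `C = C(p,w,m)`. -/
theorem heat_decay_of_vanishing_moments (w : ℝ → ℝ) (hw_pos : ∀ x, 0 < w x)
    (hw_cont : Continuous w)
    (hw_fast : ∀ j : ℕ, ∃ C : ℝ, ∀ x : ℝ, (1 + |x|) ^ j ≤ C * w x)
    (p : ℝ) (hp1 : 1 ≤ p) (m : ℕ) :
    ∃ C > 0, ∀ f : ℝ → ℝ, Measurable f →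
      Integrable (fun x => |f x| ^ p * w x) →
      Function.support f ⊆ Iic (0 : ℝ) →
      (∀ k : ℕ, 1 ≤ k → k ≤ m →
        (1 / (Nat.factorial (k - 1) : ℝ)) * ∫ y in Iic (0 : ℝ), (-y) ^ (k - 1) * f y = 0) →
      ∀ t : ℝ, 1 ≤ t → ∀ x : ℝ,
        |(2 * π * t) ^ (-(1 : ℝ) / 2) * ∫ y : ℝ, Real.exp (-(x - y) ^ 2 / (4 * t)) * f y| ≤
          C * t ^ (-(1 + (m : ℝ)) / 2) * (∫ x : ℝ, |f x| ^ p * w x) ^ (1 / p) :=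
  heat_decay_of_vanishing_moments_general w hw_pos hw_fast p hp1 m
end

section
/- Let X be a Banach space with a Schauder basis (ẽ_n) that is shrinking with respect to each of a given sequence of functionals x*_m ∈ X* (m ∈ ℕ), and let ε > 0. Then there exist an increasing sequence (n_m) ⊂ ℕ and a Schauder basis (e_n) of X with x*_m(e_n) = 0 for all n ≥ n_m, such that the linear operator T : X → X with T ẽ_n = e_n satisfies ‖id_X − T‖ < ε. -/
/-! Pick vectors `w_m` with `x*_k (w_m) = 0` for `k < m` and `x*_m (w_m) = 1` whenever `x*_m` is
not in the span of the earlier functionals. Recursively let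
`h_m = x*_m ∘ (id - ∑_{k<m} g_k ⊗ w_k)` and `g_m = h_m ∘ (id - P_{n_m})`, where shrinkingness lets
`n_m` be so large that `‖g_m‖ ‖w_m‖` is summably small. Then `S = ∑ g_m ⊗ w_m` has norm
`< min ε 1`, so `T = id - S` is invertible and carries `(ẽ_n)` to a basis. Since `x*_m` kills every
later `w_k`, `x*_m ∘ T = h_m ∘ P_{n_m}`, which vanishes on `ẽ_n` for `n ≥ n_m`; a functional in the
span of earlier ones inherits this from them. -/

open Filter Topology

/-- A Schauder basis of a Banach space: a sequence `e` together with continuous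
coordinate functionals `coord` such that every `x` is the norm-limit of its
partial expansions and `coord` is biorthogonal to `e` (this gives uniqueness of
the expansion coefficients). -/
structure RealSchauderBasis (X : Type*) [NormedAddCommGroup X] [NormedSpace ℝ X] where
  e : ℕ → X
  coord : ℕ → X →L[ℝ] ℝ
  expand : ∀ x : X,
    Tendsto (fun n => ∑ k ∈ Finset.range n, coord k x • e k) atTop (𝓝 x)
  biorth : ∀ k m, coord k (e m) = if k = m then 1 else 0

/-- The `n`-th basis projection `Q_n x = ∑_{k<n} coord_k(x) • e_k`. -/
noncomputable def RealSchauderBasis.proj {X : Type*} [NormedAddCommGroup X]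
    [NormedSpace ℝ X] (B : RealSchauderBasis X) (n : ℕ) : X →L[ℝ] X :=
  ∑ k ∈ Finset.range n, (B.coord k).smulRight (B.e k)

open Finset

theorem exists_seq_of_forall_exists_succ {α : Type*} (P : ℕ → α → Prop) (R : ℕ → α → α → Prop)
    {a : α} (ha : P 0 a) (h : ∀ m a, P m a → ∃ b, P (m + 1) b ∧ R m a b) :
    ∃ s : ℕ → α, s 0 = a ∧ ∀ m, P m (s m) ∧ R m (s m) (s (m + 1)) := by
  choose! next hP hR using h
  let s : ℕ → α := fun m => Nat.rec a next m
  have hs : ∀ m, P m (s m) := fun m => by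
    induction m with
    | zero => exact ha
    | succ m ih => exact hP m _ ih
  exact ⟨s, rfl, fun m => ⟨hs m, hR m _ (hs m)⟩⟩

theorem exists_vanishing_or_mem_span {X : Type*} [NormedAddCommGroup X] [NormedSpace ℝ X]
    (f : ℕ → X →L[ℝ] ℝ) (m : ℕ) :
    ∃ v : X, (∀ k < m, f k v = 0) ∧ (f m v = 1 ∨ f m ∈ Submodule.span ℝ (f '' Set.Iio m)) := by
  by_cases hm : f m ∈ Submodule.span ℝ (f '' Set.Iio m)
  · exact ⟨0, fun k _ => map_zero _, Or.inr hm⟩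
  obtain ⟨v, hv, hvm⟩ : ∃ v, (∀ k < m, f k v = 0) ∧ f m v ≠ 0 := by
    by_contra! H
    apply hm
    have hker : ⨅ k : Set.Iio m, LinearMap.ker (f k : X →ₗ[ℝ] ℝ)
        ≤ LinearMap.ker (f m : X →ₗ[ℝ] ℝ) := fun v hv =>
      H v fun k hk => by simpa using (Submodule.mem_iInf _).1 hv ⟨k, hk⟩
    obtain ⟨c, hc⟩ :=
      (Submodule.mem_span_range_iff_exists_fun ℝ).1 (mem_span_of_iInf_ker_le_ker hker)
    have hfm : f m = ∑ i, c i • f i := by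
      ext x
      simpa using (LinearMap.congr_fun hc x).symm
    rw [hfm]
    exact Submodule.sum_mem _ fun i _ =>
      Submodule.smul_mem _ _ (Submodule.subset_span ⟨i, i.2, rfl⟩)
  refine ⟨(f m v)⁻¹ • v, fun k hk => by simp [hv k hk], Or.inl ?_⟩
  rw [map_smul, smul_eq_mul, inv_mul_cancel₀ hvm]

theorem ContinuousLinearMap.comp_smulRight {𝕜 E F : Type*} [NontriviallyNormedField 𝕜]
    [NormedAddCommGroup E] [NormedSpace 𝕜 E] [NormedAddCommGroup F] [NormedSpace 𝕜 F]
    (φ : F →L[𝕜] 𝕜) (c : E →L[𝕜] 𝕜) (v : F) : φ.comp (c.smulRight v) = φ v • c := by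
  ext x
  simp [mul_comm]

theorem norm_tsum_lt_tsum_of_norm_lt {E : Type*} [NormedAddCommGroup E] {c : ℕ → E} {η : ℕ → ℝ}
    (h : ∀ m, ‖c m‖ < η m) (hη : Summable η) : ‖∑' m, c m‖ < ∑' m, η m :=
  (norm_tsum_le_tsum_norm <| hη.of_nonneg_of_le (fun _ => norm_nonneg _) fun m => (h m).le).trans_lt
    (Summable.tsum_lt_tsum_of_nonneg (fun _ => norm_nonneg _) (fun m => (h m).le) (h 0) hη)

namespace RealSchauderBasis

variable {X : Type*} [NormedAddCommGroup X] [NormedSpace ℝ X] (B : RealSchauderBasis X)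

noncomputable def tail (n : ℕ) : X →L[ℝ] X := ContinuousLinearMap.id ℝ X - B.proj n

lemma proj_apply (n : ℕ) (x : X) : B.proj n x = ∑ k ∈ range n, B.coord k x • B.e k := by
  simp [proj]

lemma proj_apply_e_of_le {n k : ℕ} (h : n ≤ k) : B.proj n (B.e k) = 0 := by
  rw [proj_apply]
  refine sum_eq_zero fun i hi => ?_
  rw [B.biorth, if_neg (by grind), zero_smul]

lemma coord_proj_of_lt {k n : ℕ} (h : k < n) (x : X) : B.coord k (B.proj n x) = B.coord k x := by
  simp_rw [proj_apply, map_sum, map_smul, B.biorth, smul_eq_mul, mul_ite, mul_one, mul_zero,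
    sum_ite_eq, if_pos (mem_range.2 h)]

lemma proj_comp_tail {a b : ℕ} (h : a ≤ b) : (B.proj a).comp (B.tail b) = 0 := by
  ext x
  change B.proj a (x - B.proj b x) = 0
  rw [proj_apply]
  exact sum_eq_zero fun k hk => by
    rw [map_sub, coord_proj_of_lt B ((mem_range.1 hk).trans_le h), sub_self, zero_smul]

lemma tail_comp_tail {a b : ℕ} (h : a ≤ b) : (B.tail a).comp (B.tail b) = B.tail b := by
  rw [tail, ContinuousLinearMap.sub_comp, B.proj_comp_tail h, sub_zero]
  rfl

def shrinkingFunctionals : Submodule ℝ (X →L[ℝ] ℝ) where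
  carrier := {f | Tendsto (fun n => f.comp (B.tail n)) atTop (𝓝 0)}
  add_mem' {f g} hf hg := by simpa [ContinuousLinearMap.add_comp] using hf.add hg
  zero_mem' := by simp [ContinuousLinearMap.zero_comp]
  smul_mem' c f hf := by simpa [ContinuousLinearMap.smul_comp] using hf.const_smul c

variable {B}

lemma comp_tail_mem_shrinkingFunctionals {f : X →L[ℝ] ℝ} (hf : f ∈ B.shrinkingFunctionals)
    (N : ℕ) : f.comp (B.tail N) ∈ B.shrinkingFunctionals := by
  refine (hf : Tendsto _ _ _).congr' ?_
  filter_upwards [eventually_ge_atTop N] with n hn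
  rw [ContinuousLinearMap.comp_assoc, B.tail_comp_tail hn]

variable (B) in
def map {Y : Type*} [NormedAddCommGroup Y] [NormedSpace ℝ Y] (L : X ≃L[ℝ] Y) :
    RealSchauderBasis Y where
  e k := L (B.e k)
  coord k := (B.coord k).comp (L.symm : Y →L[ℝ] X)
  expand y := by
    have := (L.continuous.tendsto _).comp (B.expand (L.symm y))
    simp only [Function.comp_def, map_sum, map_smul, L.apply_symm_apply] at this
    exact this
  biorth k m := by simpa using B.biorth k m

lemma exists_gt_norm_comp_tail_smulRight_lt {h : X →L[ℝ] ℝ} (hh : h ∈ B.shrinkingFunctionals)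
    (v : X) {r : ℝ} (hr : 0 < r) (N : ℕ) : ∃ n, N < n ∧ ‖(h.comp (B.tail n)).smulRight v‖ < r := by
  have hsmall : Tendsto (fun n => ‖(h.comp (B.tail n)).smulRight v‖) atTop (𝓝 0) := by
    simp only [ContinuousLinearMap.norm_smulRight_apply]
    simpa only [zero_mul] using (tendsto_zero_iff_norm_tendsto_zero.1 hh).mul_const ‖v‖
  exact ((eventually_gt_atTop N).and (hsmall.eventually_lt_const hr)).exists

variable {f : ℕ → X →L[ℝ] ℝ}

lemma exists_corrections (hf : ∀ m, f m ∈ B.shrinkingFunctionals)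
    (w : ℕ → X) {η : ℕ → ℝ} (hη : ∀ m, 0 < η m) :
    ∃ (g : ℕ → X →L[ℝ] ℝ) (n : ℕ → ℕ), StrictMono n ∧
      (∀ m, g m = ((f m).comp (ContinuousLinearMap.id ℝ X -
        ∑ k ∈ range m, (g k).smulRight (w k))).comp (B.tail (n m))) ∧
      ∀ m, ‖(g m).smulRight (w m)‖ < η m := by
  let corr (m : ℕ) (S : X →L[ℝ] X) (N : ℕ) : X →L[ℝ] ℝ :=
    ((f m).comp (ContinuousLinearMap.id ℝ X - S)).comp (B.tail N)
  -- The state `(S, N)` at stage `m` is the partial sum `∑_{k<m} g_k ⊗ w_k` together with `n_{m-1}`.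
  have step : ∀ m (p : (X →L[ℝ] X) × ℕ),
      (∀ φ : X →L[ℝ] ℝ, φ.comp p.1 ∈ B.shrinkingFunctionals) →
      ∃ q : (X →L[ℝ] X) × ℕ, (∀ φ : X →L[ℝ] ℝ, φ.comp q.1 ∈ B.shrinkingFunctionals) ∧
        p.2 < q.2 ∧ q.1 = p.1 + (corr m p.1 q.2).smulRight (w m) ∧
        ‖(corr m p.1 q.2).smulRight (w m)‖ < η m := by
    rintro m ⟨S, N⟩ hS
    have hh : (f m).comp (ContinuousLinearMap.id ℝ X - S) ∈ B.shrinkingFunctionals := by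
      rw [ContinuousLinearMap.comp_sub, ContinuousLinearMap.comp_id]
      exact sub_mem (hf m) (hS _)
    obtain ⟨n, hNn, hn⟩ := exists_gt_norm_comp_tail_smulRight_lt hh (w m) (hη m) N
    refine ⟨(S + (corr m S n).smulRight (w m), n), fun φ => ?_, hNn, rfl, hn⟩
    rw [ContinuousLinearMap.comp_add, ContinuousLinearMap.comp_smulRight]
    exact add_mem (hS φ) (Submodule.smul_mem _ _ (comp_tail_mem_shrinkingFunctionals hh n))
  obtain ⟨s, hs0, hs⟩ := exists_seq_of_forall_exists_succ _ _ (a := ((0 : X →L[ℝ] X), 0))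
    (by simp [ContinuousLinearMap.comp_zero, zero_mem]) fun m p hp =>
      let ⟨q, hq, hpq⟩ := step m p hp; ⟨q, hq, hpq⟩
  have hsum : ∀ m, (s m).1 = ∑ k ∈ range m, (corr k (s k).1 (s (k + 1)).2).smulRight (w k) := by
    intro m
    induction m with
    | zero => simp [hs0]
    | succ m ih => rw [sum_range_succ, ← ih]; exact (hs m).2.2.1
  refine ⟨fun m => corr m (s m).1 (s (m + 1)).2, fun m => (s (m + 1)).2,
    strictMono_nat_of_lt_succ fun m => (hs (m + 1)).2.1, fun m => ?_, fun m => (hs m).2.2.2⟩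
  change corr m (s m).1 _ = corr m _ _
  rw [← hsum m]

variable {g : ℕ → X →L[ℝ] ℝ} {w : ℕ → X} {n : ℕ → ℕ}

lemma comp_tsum_smulRight (hw : ∀ m, ∀ k < m, f k (w m) = 0)
    (hc : Summable fun m => (g m).smulRight (w m)) (j : ℕ) :
    (f j).comp (∑' m, (g m).smulRight (w m)) = ∑ m ∈ range (j + 1), f j (w m) • g m := by
  rw [← ContinuousLinearMap.compL_apply ℝ X X ℝ,
    (ContinuousLinearMap.compL ℝ X X ℝ (f j)).map_tsum hc,
    tsum_eq_sum (s := range (j + 1)) fun m hm => ?_]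
  · simp [ContinuousLinearMap.comp_smulRight]
  · rw [ContinuousLinearMap.compL_apply, ContinuousLinearMap.comp_smulRight,
      hw m j (by simpa using hm), zero_smul]

lemma comp_sub_tsum_smulRight_of_apply_eq_one (hw : ∀ m, ∀ k < m, f k (w m) = 0)
    (hc : Summable fun m => (g m).smulRight (w m))
    (hg : ∀ m, g m = ((f m).comp (ContinuousLinearMap.id ℝ X -
      ∑ k ∈ range m, (g k).smulRight (w k))).comp (B.tail (n m)))
    {j : ℕ} (hj : f j (w j) = 1) :
    (f j).comp (ContinuousLinearMap.id ℝ X - ∑' m, (g m).smulRight (w m)) =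
      ((f j).comp (ContinuousLinearMap.id ℝ X -
        ∑ k ∈ range j, (g k).smulRight (w k))).comp (B.proj (n j)) := by
  have hh : (f j).comp (ContinuousLinearMap.id ℝ X - ∑ k ∈ range j, (g k).smulRight (w k)) =
      f j - ∑ k ∈ range j, f j (w k) • g k := by
    simp only [ContinuousLinearMap.comp_sub, ContinuousLinearMap.comp_id,
      ContinuousLinearMap.comp_finsetSum, ContinuousLinearMap.comp_smulRight]
  rw [ContinuousLinearMap.comp_sub, comp_tsum_smulRight hw hc, sum_range_succ, hj, one_smul,
    hg j, tail, ContinuousLinearMap.comp_sub, hh]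
  simp only [ContinuousLinearMap.comp_id]
  abel

lemma apply_sub_tsum_smulRight_e_eq_zero (hn : StrictMono n)
    (hw : ∀ m, ∀ k < m, f k (w m) = 0)
    (hw' : ∀ m, f m (w m) = 1 ∨ f m ∈ Submodule.span ℝ (f '' Set.Iio m))
    (hc : Summable fun m => (g m).smulRight (w m))
    (hg : ∀ m, g m = ((f m).comp (ContinuousLinearMap.id ℝ X -
      ∑ k ∈ range m, (g k).smulRight (w k))).comp (B.tail (n m)))
    (j k : ℕ) (hjk : n j ≤ k) :
    f j ((ContinuousLinearMap.id ℝ X - ∑' m, (g m).smulRight (w m)) (B.e k)) = 0 := by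
  induction j using Nat.strong_induction_on with
  | _ j ih =>
  rcases hw' j with hj | hspan
  · rw [← ContinuousLinearMap.comp_apply, comp_sub_tsum_smulRight_of_apply_eq_one hw hc hg hj,
      ContinuousLinearMap.comp_apply, B.proj_apply_e_of_le hjk, map_zero]
  · set y := (ContinuousLinearMap.id ℝ X - ∑' m, (g m).smulRight (w m)) (B.e k)
    refine Submodule.span_le (p := LinearMap.ker
      (ContinuousLinearMap.apply ℝ ℝ y : (X →L[ℝ] ℝ) →ₗ[ℝ] ℝ)).2 ?_ hspan
    rintro _ ⟨i, hi, rfl⟩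
    exact ih i hi ((hn hi).le.trans hjk)

end RealSchauderBasis

/-- Theorem 1.4: if a Schauder basis `(ẽ_n)` of a Banach space `X` is shrinking
with respect to each functional `x*_m`, then for every `ε > 0` there are an
increasing sequence `(n_m)` and a Schauder basis `(e_n)` of `X` with
`x*_m(e_n) = 0` for all `n ≥ n_m`, such that the operator `T` with `T ẽ_n = e_n`
satisfies `‖id − T‖ < ε`. -/
theorem basis_annihilating_functionals {X : Type*} [NormedAddCommGroup X]
    [NormedSpace ℝ X] [CompleteSpace X] (B : RealSchauderBasis X)
    (xstar : ℕ → X →L[ℝ] ℝ)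
    (hshr : ∀ m, Tendsto
      (fun n => ‖(xstar m).comp (ContinuousLinearMap.id ℝ X - B.proj n)‖) atTop (𝓝 0))
    (ε : ℝ) (hε : 0 < ε) :
    ∃ nm : ℕ → ℕ, StrictMono nm ∧
      ∃ B' : RealSchauderBasis X,
        (∀ m n, nm m ≤ n → xstar m (B'.e n) = 0) ∧
        ∃ T : X →L[ℝ] X, (∀ n, T (B.e n) = B'.e n) ∧
          ‖ContinuousLinearMap.id ℝ X - T‖ < ε := by
  choose w hw hw' using exists_vanishing_or_mem_span xstar
  set δ := min ε 1
  have hδ : 0 < δ := lt_min hε one_pos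
  obtain ⟨g, n, hn, hg, hgη⟩ := B.exists_corrections
    (fun m => tendsto_zero_iff_norm_tendsto_zero.2 (hshr m)) w (η := fun m => δ / 2 / 2 ^ m)
    fun m => by positivity
  have hc : Summable fun m => (g m).smulRight (w m) :=
    (summable_geometric_two' δ).of_norm_bounded fun m => (hgη m).le
  set S := ∑' m, (g m).smulRight (w m)
  have hS : ‖S‖ < δ :=
    tsum_geometric_two' δ ▸ norm_tsum_lt_tsum_of_norm_lt hgη (summable_geometric_two' δ)
  let T : X ≃L[ℝ] X :=
    ContinuousLinearEquiv.unitsEquiv ℝ X (Units.oneSub S (hS.trans_le (min_le_right ε 1)))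
  refine ⟨n, hn, B.map T, RealSchauderBasis.apply_sub_tsum_smulRight_e_eq_zero hn hw hw' hc hg,
    T, fun _ => rfl, ?_⟩
  calc ‖ContinuousLinearMap.id ℝ X - T‖ = ‖S‖ := by
        rw [show (T : X →L[ℝ] X) = 1 - S from rfl, ← ContinuousLinearMap.one_def, sub_sub_cancel]
    _ < ε := hS.trans_le (min_le_left ε 1)
end

section
/- Let w : ℝ → (0,∞) be a continuous fast-growing weight. Define α(s) = log s for s ∈ (0,1] and S f(s) = f(α(s)) w(α(s))/s. Then S is an isometric isomorphism from L^{1,−}_w(ℝ) (weighted L¹ functions supported in (-∞,0]) onto L¹(0,1), and for every m ≥ 1, J^m f = ∫_0^1 (Sf)(s) · (−α(s))^{m−1}/((m−1)! w(α(s))) ds. -/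
open MeasureTheory Set Real

/-- The substitution operator `S f(s) = f(log s) w(log s)/s`. -/
noncomputable def subOp (w : ℝ → ℝ) (f : ℝ → ℝ) : ℝ → ℝ :=
  fun s => f (Real.log s) * w (Real.log s) / s

/-!
Substituting `s = exp x` turns `ds` into `exp x dx`, and `exp x · S f (exp x) = f x · w x`.
So every integral of `S f` over `(0, 1)` is an integral of `f w` over `(-∞, 0]`, which gives the
isometry and the formula for `J^m`; solving the identity for `f` on `x < 0` gives the preimage
`x ↦ exp x · g (exp x) / w x` of `g`.
-/

section ExpSubstitution

variable {E : Type*} [NormedAddCommGroup E] [NormedSpace ℝ E]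

theorem integrableOn_Ioo_zero_one_iff_exp (g : ℝ → E) :
    IntegrableOn g (Ioo 0 1) ↔ IntegrableOn (fun x => exp x • g (exp x)) (Iic 0) := by
  rw [← exp_zero, ← image_exp_Iio, integrableOn_image_iff_integrableOn_abs_deriv_smul
    measurableSet_Iio (fun x _ => (hasDerivAt_exp x).hasDerivWithinAt) exp_injective.injOn,
    ← integrableOn_Iic_iff_integrableOn_Iio]
  simp only [abs_of_pos (exp_pos _)]

theorem integral_Ioo_zero_one_eq_exp (g : ℝ → E) :
    ∫ s in Ioo 0 1, g s = ∫ x in Iic 0, exp x • g (exp x) := by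
  rw [← exp_zero, ← image_exp_Iio, integral_image_eq_integral_abs_deriv_smul measurableSet_Iio
    (fun x _ => (hasDerivAt_exp x).hasDerivWithinAt) exp_injective.injOn,
    integral_Iic_eq_integral_Iio]
  simp only [abs_of_pos (exp_pos _)]

end ExpSubstitution

section SubOp

variable {w f : ℝ → ℝ}

theorem exp_mul_subOp_exp (x : ℝ) : exp x * subOp w f (exp x) = f x * w x := by
  simp only [subOp, log_exp]
  field_simp

theorem integral_subOp_mul_comp_log (φ : ℝ → ℝ) :
    ∫ s in Ioo 0 1, subOp w f s * φ (log s) = ∫ x in Iic 0, f x * w x * φ x := by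
  simp only [integral_Ioo_zero_one_eq_exp, smul_eq_mul, log_exp, ← mul_assoc, exp_mul_subOp_exp]

theorem integrableOn_subOp_iff (hw : ∀ x, 0 ≤ w x) (hwm : Measurable w) (hf : Measurable f)
    (hsupp : f.support ⊆ Iic 0) :
    IntegrableOn (subOp w f) (Ioo 0 1) ↔ Integrable (fun x => |f x| * w x) := by
  have hnorm : (fun x => |f x| * w x) = fun x => ‖f x * w x‖ := by
    ext x
    rw [norm_mul, norm_of_nonneg (hw x), Real.norm_eq_abs]
  simp only [integrableOn_Ioo_zero_one_iff_exp, smul_eq_mul, exp_mul_subOp_exp, hnorm]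
  rw [integrable_norm_iff (f := fun x => f x * w x) (hf.mul hwm).aestronglyMeasurable]
  exact integrableOn_iff_integrable_of_support_subset
    ((Function.support_mul_subset_left _ _).trans hsupp)

theorem integral_abs_subOp (hw : ∀ x, 0 ≤ w x) (hsupp : f.support ⊆ Iic 0) :
    ∫ s in Ioo 0 1, |subOp w f s| = ∫ x, |f x| * w x := by
  have hexp (x : ℝ) : exp x * |subOp w f (exp x)| = |f x| * w x := by
    rw [← abs_of_pos (exp_pos x), ← abs_mul, abs_of_pos (exp_pos x), exp_mul_subOp_exp, abs_mul,
      abs_of_nonneg (hw x)]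
  simp only [integral_Ioo_zero_one_eq_exp, smul_eq_mul, hexp]
  refine setIntegral_eq_integral_of_forall_compl_eq_zero fun x hx => ?_
  rw [Function.notMem_support.mp fun h => hx (hsupp h), abs_zero, zero_mul]

noncomputable def subOpInv (w g : ℝ → ℝ) : ℝ → ℝ :=
  (Iio 0).indicator fun x => exp x * g (exp x) / w x

theorem support_subOpInv_subset (g : ℝ → ℝ) : (subOpInv w g).support ⊆ Iic 0 :=
  support_indicator_subset.trans Iio_subset_Iic_self

theorem measurable_subOpInv {g : ℝ → ℝ} (hwm : Measurable w) (hg : Measurable g) :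
    Measurable (subOpInv w g) :=
  Measurable.indicator (by fun_prop) measurableSet_Iio

theorem subOp_subOpInv (hw : ∀ x, w x ≠ 0) (g : ℝ → ℝ) {s : ℝ} (hs : s ∈ Ioo 0 1) :
    subOp w (subOpInv w g) s = g s := by
  have hlog : log s ∈ Iio 0 := log_neg hs.1 hs.2
  simp only [subOp, subOpInv, indicator_of_mem hlog, exp_log hs.1]
  field_simp [hs.1.ne', hw (log s)]

theorem exists_subOp_ae_eq (hw : ∀ x, 0 < w x) (hwm : Measurable w) {g : ℝ → ℝ}
    (hg : IntegrableOn g (Ioo 0 1)) :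
    ∃ f : ℝ → ℝ, Measurable f ∧ f.support ⊆ Iic 0 ∧ Integrable (fun x => |f x| * w x) ∧
      ∀ᵐ s, s ∈ Ioo 0 1 → subOp w f s = g s := by
  obtain ⟨G, hGm, hGg⟩ := hg.aestronglyMeasurable
  have hfm : Measurable (subOpInv w G) := measurable_subOpInv hwm hGm.measurable
  have hSG : EqOn (subOp w (subOpInv w G)) G (Ioo 0 1) :=
    fun s hs => subOp_subOpInv (fun x => (hw x).ne') G hs
  refine ⟨subOpInv w G, hfm, support_subOpInv_subset G,
    (integrableOn_subOp_iff (fun x => (hw x).le) hwm hfm (support_subOpInv_subset G)).mp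
      (IntegrableOn.congr_fun (hg.congr hGg) hSG.symm measurableSet_Ioo), ?_⟩
  filter_upwards [(ae_restrict_iff' measurableSet_Ioo).mp hGg] with s hgs hs
  rw [hSG hs, hgs hs]

end SubOp

theorem subOp_isometric_iso_general (w : ℝ → ℝ) (hw_pos : ∀ x, 0 < w x)
    (hw_cont : Continuous w) :
    -- isometry: `S` maps `L^{1,−}_w(ℝ)` into `L¹(0,1)` preserving the norm
    (∀ f : ℝ → ℝ, Measurable f → Function.support f ⊆ Iic (0 : ℝ) →
      ((IntegrableOn (subOp w f) (Ioo (0 : ℝ) 1) ↔ Integrable (fun x => |f x| * w x)) ∧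
        (Integrable (fun x => |f x| * w x) →
          ∫ s in Ioo (0 : ℝ) 1, |subOp w f s| = ∫ x : ℝ, |f x| * w x))) ∧
    -- surjectivity onto `L¹(0,1)`
    (∀ g : ℝ → ℝ, IntegrableOn g (Ioo (0 : ℝ) 1) →
      ∃ f : ℝ → ℝ, Measurable f ∧ Function.support f ⊆ Iic (0 : ℝ) ∧
        Integrable (fun x => |f x| * w x) ∧
        ∀ᵐ s : ℝ, s ∈ Ioo (0 : ℝ) 1 → subOp w f s = g s) ∧
    -- the formula for `J^m`
    (∀ f : ℝ → ℝ, Measurable f → Function.support f ⊆ Iic (0 : ℝ) →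
      Integrable (fun x => |f x| * w x) →
      ∀ m : ℕ, 1 ≤ m →
        (1 / (Nat.factorial (m - 1) : ℝ)) * ∫ y in Iic (0 : ℝ), (-y) ^ (m - 1) * f y =
          ∫ s in Ioo (0 : ℝ) 1,
            subOp w f s * ((-Real.log s) ^ (m - 1) /
              ((Nat.factorial (m - 1) : ℝ) * w (Real.log s)))) := by
  have hw_nonneg (x : ℝ) : 0 ≤ w x := (hw_pos x).le
  refine ⟨fun f hf hsupp => ⟨integrableOn_subOp_iff hw_nonneg hw_cont.measurable hf hsupp,
      fun _ => integral_abs_subOp hw_nonneg hsupp⟩,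
    fun g hg => exists_subOp_ae_eq hw_pos hw_cont.measurable hg, ?_⟩
  intro f _ _ _ m _
  rw [← integral_const_mul, integral_subOp_mul_comp_log
    (fun x => (-x) ^ (m - 1) / ((Nat.factorial (m - 1) : ℝ) * w x))]
  refine setIntegral_congr_fun measurableSet_Iic fun x _ => ?_
  field_simp [(hw_pos x).ne']

/-- The operator `S f(s) = f(log s) w(log s)/s` is an isometric isomorphism from
`L^{1,−}_w(ℝ)` onto `L¹(0,1)`: it preserves integrability and the norm, it is
surjective onto `L¹(0,1)`, and `J^m f = ∫_0^1 (Sf)(s) (−log s)^{m−1}/((m−1)! w(log s)) ds`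
for every `m ≥ 1`.  (Linearity of `S` is evident from the formula.) -/
theorem subOp_isometric_iso (w : ℝ → ℝ) (hw_pos : ∀ x, 0 < w x)
    (hw_cont : Continuous w)
    (hw_fast : ∀ k : ℕ, ∃ C : ℝ, ∀ x : ℝ, (1 + |x|) ^ k ≤ C * w x) :
    -- isometry: `S` maps `L^{1,−}_w(ℝ)` into `L¹(0,1)` preserving the norm
    (∀ f : ℝ → ℝ, Measurable f → Function.support f ⊆ Iic (0 : ℝ) →
      ((IntegrableOn (subOp w f) (Ioo (0 : ℝ) 1) ↔ Integrable (fun x => |f x| * w x)) ∧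
        (Integrable (fun x => |f x| * w x) →
          ∫ s in Ioo (0 : ℝ) 1, |subOp w f s| = ∫ x : ℝ, |f x| * w x))) ∧
    -- surjectivity onto `L¹(0,1)`
    (∀ g : ℝ → ℝ, IntegrableOn g (Ioo (0 : ℝ) 1) →
      ∃ f : ℝ → ℝ, Measurable f ∧ Function.support f ⊆ Iic (0 : ℝ) ∧
        Integrable (fun x => |f x| * w x) ∧
        ∀ᵐ s : ℝ, s ∈ Ioo (0 : ℝ) 1 → subOp w f s = g s) ∧
    -- the formula for `J^m`
    (∀ f : ℝ → ℝ, Measurable f → Function.support f ⊆ Iic (0 : ℝ) →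
      Integrable (fun x => |f x| * w x) →
      ∀ m : ℕ, 1 ≤ m →
        (1 / (Nat.factorial (m - 1) : ℝ)) * ∫ y in Iic (0 : ℝ), (-y) ^ (m - 1) * f y =
          ∫ s in Ioo (0 : ℝ) 1,
            subOp w f s * ((-Real.log s) ^ (m - 1) /
              ((Nat.factorial (m - 1) : ℝ) * w (Real.log s)))) :=
  subOp_isometric_iso_general w hw_pos hw_cont
end

section
/- Let w : ℝᴺ → (0,∞) satisfy sup_x (1+|x|)^k/w(x) =: B_k < ∞ for all k ∈ ℕ. Define ṽ(x) = Π_{j=1}^N Σ_{k=1}^∞ 2^{-k} B_k^{-1/N} (1+|x_j|)^{k/N}. Then ṽ(x) ≤ w(x) for all x ∈ ℝᴺ, and consequently L^p_w(ℝᴺ) ⊆ L^p_ṽ(ℝᴺ) continuously for every 1 ≤ p < ∞. -/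
open MeasureTheory Real

/-- The product weight `ṽ(x) = Π_{j=1}^N Σ_{k=1}^∞ 2^{-k} B_k^{-1/N} (1+|x_j|)^{k/N}`. -/
noncomputable def vtil (N : ℕ) (B : ℕ → ℝ) (x : EuclideanSpace ℝ (Fin N)) : ℝ :=
  ∏ j : Fin N, ∑' k : ℕ,
    (2 : ℝ) ^ (-((k : ℝ) + 1)) * (B (k + 1)) ^ (-(1 : ℝ) / N) *
      (1 + |x j|) ^ (((k : ℝ) + 1) / N)

/-- If `w` is a fast-growing weight on `ℝᴺ` with `(1+|x|)^k ≤ B_k w(x)` for all `k`,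
then the product weight `ṽ` satisfies `ṽ ≤ w` pointwise, and consequently
`L^p_w(ℝᴺ) ⊆ L^p_ṽ(ℝᴺ)` continuously (with embedding constant `1`) for every
`1 ≤ p < ∞`. -/
theorem vtil_le_and_embedding (N : ℕ) (hN : 0 < N)
    (w : EuclideanSpace ℝ (Fin N) → ℝ) (hw_pos : ∀ x, 0 < w x)
    (B : ℕ → ℝ) (hB_pos : ∀ k, 0 < B k)
    (hB : ∀ k : ℕ, ∀ x : EuclideanSpace ℝ (Fin N), (1 + ‖x‖) ^ k ≤ B k * w x)
    (p : ℝ) (hp : 1 ≤ p) :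
    (∀ x, vtil N B x ≤ w x) ∧
    ∀ f : EuclideanSpace ℝ (Fin N) → ℝ, Measurable f →
      Integrable (fun x => |f x| ^ p * w x) →
      Integrable (fun x => |f x| ^ p * vtil N B x) ∧
        (∫ x, |f x| ^ p * vtil N B x) ^ (1 / p) ≤
          (∫ x, |f x| ^ p * w x) ^ (1 / p) := by
  have hNpos : (0:ℝ) < N := Nat.cast_pos.mpr hN
  -- the general term
  set t : Fin N → EuclideanSpace ℝ (Fin N) → ℕ → ℝ := fun j x k =>
    (2 : ℝ) ^ (-((k : ℝ) + 1)) * (B (k + 1)) ^ (-(1 : ℝ) / N) *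
      (1 + |x j|) ^ (((k : ℝ) + 1) / N) with ht_def
  have hbase_pos : ∀ (x : EuclideanSpace ℝ (Fin N)) (j : Fin N), (0:ℝ) < 1 + |x j| :=
    fun x j => by positivity
  have ht_nonneg : ∀ j x k, 0 ≤ t j x k := by
    intro j x k
    have h1 := hbase_pos x j
    have h2 := hB_pos (k+1)
    simp only [ht_def]
    positivity
  have hcoord : ∀ (x : EuclideanSpace ℝ (Fin N)) (j : Fin N), |x j| ≤ ‖x‖ := by
    intro x j
    rw [EuclideanSpace.norm_eq, ← Real.sqrt_sq_eq_abs]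
    apply Real.sqrt_le_sqrt
    have := Finset.single_le_sum (f := fun i => ‖x i‖ ^ 2)
      (fun i _ => by positivity) (Finset.mem_univ j)
    simpa [Real.norm_eq_abs, sq_abs] using this
  have ht_le : ∀ j x k, t j x k ≤ (2 : ℝ) ^ (-((k : ℝ) + 1)) * (w x) ^ ((1:ℝ) / N) := by
    intro j x k
    have hbp := hbase_pos x j
    have hBp := hB_pos (k+1)
    have hwp := hw_pos x
    have key : (1 + |x j|) ^ (((k : ℝ) + 1) / N) ≤
        (B (k+1)) ^ ((1:ℝ)/N) * (w x) ^ ((1:ℝ)/N) := by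
      have h1 : (1 + |x j|) ^ ((k:ℕ) + 1) ≤ B (k+1) * w x := by
        calc (1 + |x j|) ^ ((k:ℕ) + 1) ≤ (1 + ‖x‖) ^ ((k:ℕ) + 1) := by
              apply pow_le_pow_left₀ (le_of_lt hbp)
              linarith [hcoord x j]
          _ ≤ B (k+1) * w x := hB (k+1) x
      have h2 : (1 + |x j|) ^ (((k : ℝ) + 1) / N) =
          ((1 + |x j|) ^ ((k:ℕ) + 1)) ^ ((1:ℝ)/N) := by
        rw [← Real.rpow_natCast (1 + |x j|) (k+1), ← Real.rpow_mul (le_of_lt hbp)]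
        push_cast
        ring_nf
      rw [h2, ← Real.mul_rpow (le_of_lt hBp) (le_of_lt hwp)]
      apply Real.rpow_le_rpow (by positivity) h1 (by positivity)
    have h3 : (B (k+1)) ^ (-(1:ℝ)/N) * (1 + |x j|) ^ (((k : ℝ) + 1) / N) ≤
        (w x) ^ ((1:ℝ)/N) := by
      have hB' : (0:ℝ) < (B (k+1)) ^ (-(1:ℝ)/N) := Real.rpow_pos_of_pos hBp _
      calc (B (k+1)) ^ (-(1:ℝ)/N) * (1 + |x j|) ^ (((k : ℝ) + 1) / N)
          ≤ (B (k+1)) ^ (-(1:ℝ)/N) * ((B (k+1)) ^ ((1:ℝ)/N) * (w x) ^ ((1:ℝ)/N)) :=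
            by exact mul_le_mul_of_nonneg_left key (le_of_lt hB')
        _ = (B (k+1)) ^ (-(1:ℝ)/N + (1:ℝ)/N) * (w x) ^ ((1:ℝ)/N) := by
            rw [Real.rpow_add hBp]; ring
        _ = (w x) ^ ((1:ℝ)/N) := by
            rw [neg_div, neg_add_cancel, Real.rpow_zero, one_mul]
    simp only [ht_def]
    rw [mul_assoc]
    apply mul_le_mul_of_nonneg_left h3 (by positivity)
  have h2pow : ∀ k : ℕ, (2:ℝ) ^ (-((k : ℝ) + 1)) = (1/2 : ℝ) ^ (k + 1) := by
    intro k
    rw [Real.rpow_neg (by norm_num)]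
    have : ((k:ℝ) + 1) = ((k+1 : ℕ) : ℝ) := by push_cast; ring
    rw [this, Real.rpow_natCast]
    simp [inv_pow]
  have hgeo : Summable (fun k : ℕ => (1/2 : ℝ) ^ (k + 1)) := by
    apply Summable.comp_injective (summable_geometric_of_lt_one (by norm_num) (by norm_num))
    exact add_left_injective 1
  have hgeo_sum : ∑' k : ℕ, (1/2 : ℝ) ^ (k + 1) = 1 := by
    have : ∀ k : ℕ, (1/2 : ℝ) ^ (k + 1) = (1/2 : ℝ) * (1/2)^k := by
      intro k; ring
    simp_rw [this]
    rw [tsum_mul_left, tsum_geometric_of_lt_one (by norm_num) (by norm_num)]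
    norm_num
  have hsum : ∀ j x, Summable (t j x) := by
    intro j x
    apply Summable.of_nonneg_of_le (ht_nonneg j x) (ht_le j x)
    simp_rw [h2pow]
    exact hgeo.mul_right _
  have hg_le : ∀ j x, (∑' k, t j x k) ≤ (w x) ^ ((1:ℝ)/N) := by
    intro j x
    calc (∑' k, t j x k) ≤ ∑' k : ℕ, (2 : ℝ) ^ (-((k : ℝ) + 1)) * (w x) ^ ((1:ℝ)/N) := by
          apply Summable.tsum_le_tsum (ht_le j x) (hsum j x)
          simp_rw [h2pow]
          exact hgeo.mul_right _
      _ = (w x) ^ ((1:ℝ)/N) := by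
          simp_rw [h2pow]
          rw [tsum_mul_right, hgeo_sum, one_mul]
  have hg_nonneg : ∀ j x, 0 ≤ (∑' k, t j x k) := fun j x =>
    tsum_nonneg (ht_nonneg j x)
  -- pointwise inequality
  have hmain : ∀ x, vtil N B x ≤ w x := by
    intro x
    have hwp := hw_pos x
    calc vtil N B x ≤ ∏ _j : Fin N, (w x) ^ ((1:ℝ)/N) := by
          apply Finset.prod_le_prod (fun j _ => hg_nonneg j x) (fun j _ => hg_le j x)
      _ = ((w x) ^ ((1:ℝ)/N)) ^ (N : ℕ) := by
          rw [Finset.prod_const, Finset.card_univ, Fintype.card_fin]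
      _ = w x := by
          rw [← Real.rpow_natCast ((w x) ^ ((1:ℝ)/N)) N,
            ← Real.rpow_mul (le_of_lt hwp)]
          rw [one_div, inv_mul_cancel₀ (ne_of_gt hNpos), Real.rpow_one]
  refine ⟨hmain, ?_⟩
  -- the embedding
  have hvt_nonneg : ∀ x, 0 ≤ vtil N B x := fun x =>
    Finset.prod_nonneg (fun j _ => hg_nonneg j x)
  have hvt_meas : Measurable (vtil N B) := by
    apply Finset.measurable_prod
    intro j _
    apply measurable_of_tendsto_metrizable
      (f := fun n x => ∑ k ∈ Finset.range n, t j x k)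
    · intro n
      apply Finset.measurable_sum
      intro k _
      have hc : Continuous fun x : EuclideanSpace ℝ (Fin N) =>
          (1 + |x j|) ^ (((k : ℝ) + 1) / N) := by
        apply Continuous.rpow_const
        · exact continuous_const.add ((EuclideanSpace.proj j).continuous.abs)
        · intro x
          left
          exact ne_of_gt (hbase_pos x j)
      exact (hc.measurable).const_mul _
    · rw [tendsto_pi_nhds]
      intro x
      exact (hsum j x).hasSum.tendsto_sum_nat
  intro f hf hint
  have hfm : Measurable fun x => |f x| ^ p * vtil N B x := by
    apply Measurable.mul _ hvt_meas
    apply Measurable.pow (hf.abs) measurable_const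
  have hbound : ∀ x, |f x| ^ p * vtil N B x ≤ |f x| ^ p * w x := by
    intro x
    apply mul_le_mul_of_nonneg_left (hmain x)
    positivity
  have hnonneg : ∀ x, 0 ≤ |f x| ^ p * vtil N B x := by
    intro x
    have := hvt_nonneg x
    positivity
  have hint' : Integrable (fun x => |f x| ^ p * vtil N B x) := by
    apply hint.mono hfm.aestronglyMeasurable
    filter_upwards with x
    have h1 : ‖|f x| ^ p * vtil N B x‖ = |f x| ^ p * vtil N B x := by
      rw [Real.norm_eq_abs]; exact abs_of_nonneg (hnonneg x)
    rw [h1, Real.norm_eq_abs]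
    exact (hbound x).trans (le_abs_self _)
  refine ⟨hint', ?_⟩
  apply Real.rpow_le_rpow (integral_nonneg hnonneg)
    (integral_mono hint' hint hbound) (by positivity)
end
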